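/- Let X and Z be real algebraic sets with X ⊆ Z. If there is a surjective polynomial map φ: X → Z, then X = Z. -/

import Mathlib

/-- A real algebraic set in `ℝⁿ`: the common zero locus of finitely many real
polynomials. -/
def IsRealAlgebraicSet {n : ℕ} (X : Set (Fin n → ℝ)) : Prop :=
  ∃ S : Finset (MvPolynomial (Fin n) ℝ),
    X = {x | ∀ p ∈ S, MvPolynomial.eval x p = 0}

/-- A polynomial map between subsets of affine spaces: the restriction of a map
`ℝⁿ → ℝᵐ` whose coordinates are polynomials. -/
def IsPolynomialMap {n m : ℕ} (f : (Fin n → ℝ) → (Fin m → ℝ)) : Prop :=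
  ∃ P : Fin m → MvPolynomial (Fin n) ℝ, ∀ x i, f x i = MvPolynomial.eval x (P i)

/-!
For `z ∈ Z` and every `k`, surjectivity gives a point `x` whose forward orbit
`x, φ x, …, φ^[k-1] x` stays in `X` while `φ^[k] x = z`. But the ideals generated by the
pullbacks `p ∘ φ^[j]` (`p` among the equations of `X`, `j ≤ k`) form an ascending chain
in a Noetherian ring, so for some `N` the equations of `φ^[N+1]⁻¹ X` already follow from
those of `X, φ⁻¹ X, …, φ^[N]⁻¹ X`: an orbit staying in `X` for `N + 1` steps stays in `X`
one step more, so `z = φ^[N+1] x ∈ X`.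
-/

open MvPolynomial

theorem IsNoetherianRing.exists_subset_span_biUnion {R : Type*} [CommSemiring R]
    [IsNoetherianRing R] (T : ℕ → Set R) :
    ∃ N, T (N + 1) ⊆ Ideal.span (⋃ j ≤ N, T j) := by
  let J : ℕ →o Ideal R :=
    ⟨fun k ↦ Ideal.span (⋃ j ≤ k, T j), fun a b hab ↦
      Ideal.span_mono (Set.biUnion_subset_biUnion_left fun _ hj ↦ le_trans hj hab)⟩
  obtain ⟨N, hN⟩ := WellFoundedGT.monotone_chain_condition J
  refine ⟨N, fun r hr ↦ ?_⟩
  change r ∈ J N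
  rw [hN (N + 1) N.le_succ]
  exact Ideal.subset_span (Set.mem_biUnion (le_refl (N + 1)) hr)

theorem MvPolynomial.eval_iterate_bind₁ {R σ : Type*} [CommSemiring R]
    {f : (σ → R) → σ → R} {P : σ → MvPolynomial σ R} (hf : ∀ x i, f x i = eval x (P i))
    (j : ℕ) (x : σ → R) (p : MvPolynomial σ R) :
    eval x ((bind₁ P)^[j] p) = eval (f^[j] x) p := by
  induction j generalizing x with
  | zero => rfl
  | succ j ih =>
    rw [Function.iterate_succ_apply', Function.iterate_succ_apply, ← ih, _root_.funext (hf x)]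
    exact aeval_bind₁ x P _

theorem IsRealAlgebraicSet.exists_iterate_mem {n : ℕ} {X : Set (Fin n → ℝ)}
    (hX : IsRealAlgebraicSet X) {f : (Fin n → ℝ) → (Fin n → ℝ)} (hf : IsPolynomialMap f) :
    ∃ N, ∀ x, (∀ j ≤ N, f^[j] x ∈ X) → f^[N + 1] x ∈ X := by
  obtain ⟨S, rfl⟩ := hX
  obtain ⟨P, hP⟩ := hf
  obtain ⟨N, hN⟩ := IsNoetherianRing.exists_subset_span_biUnion
    fun j ↦ (bind₁ P)^[j] '' (S : Set (MvPolynomial (Fin n) ℝ))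
  refine ⟨N, fun x hx p hp ↦ ?_⟩
  have hker : Ideal.span (⋃ j ≤ N, (bind₁ P)^[j] '' (S : Set _)) ≤ RingHom.ker (eval x) := by
    refine Ideal.span_le.mpr (Set.iUnion₂_subset fun j hj ↦ ?_)
    rintro _ ⟨q, hq, rfl⟩
    rw [SetLike.mem_coe, RingHom.mem_ker, eval_iterate_bind₁ hP]
    exact hx j hj q hq
  rw [← eval_iterate_bind₁ hP]
  exact hker (hN ⟨p, hp, rfl⟩)

theorem Set.SurjOn.exists_iterate_eq {α : Type*} {f : α → α} {s t : Set α}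
    (hf : SurjOn f s t) (hst : s ⊆ t) (k : ℕ) {z : α} (hz : z ∈ t) :
    ∃ x, (∀ j < k, f^[j] x ∈ s) ∧ f^[k] x = z := by
  induction k generalizing z with
  | zero => exact ⟨z, by simp, rfl⟩
  | succ k ih =>
    obtain ⟨w, hw, rfl⟩ := hf hz
    obtain ⟨x, hxs, rfl⟩ := ih (hst hw)
    refine ⟨x, fun j hj ↦ ?_, Function.iterate_succ_apply' f k x⟩
    rcases Nat.lt_succ_iff_lt_or_eq.mp hj with hj | rfl
    exacts [hxs j hj, hw]

theorem realAlgebraicSet_eq_of_surjective_polynomial_map_general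
    {n : ℕ} (X Z : Set (Fin n → ℝ))
    (hX : IsRealAlgebraicSet X)
    (hXZ : X ⊆ Z)
    (φ : (Fin n → ℝ) → (Fin n → ℝ))
    (hφ : IsPolynomialMap φ)
    (hsurj : Set.SurjOn φ X Z) :
    X = Z := by
  refine hXZ.antisymm fun z hz ↦ ?_
  obtain ⟨N, hN⟩ := hX.exists_iterate_mem hφ
  obtain ⟨x, hxX, rfl⟩ := hsurj.exists_iterate_eq hXZ (N + 1) hz
  exact hN x fun j hj ↦ hxX j (Nat.lt_succ_of_le hj)

/-- Lemma A.2 of Agol.  Let `X` and `Z` be real algebraic sets with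
`X ⊆ Z`.  If there is a surjective polynomial map `φ : X → Z`, then `X = Z`. -/
theorem realAlgebraicSet_eq_of_surjective_polynomial_map
    {n : ℕ} (X Z : Set (Fin n → ℝ))
    (hX : IsRealAlgebraicSet X) (hZ : IsRealAlgebraicSet Z)
    (hXZ : X ⊆ Z)
    (φ : (Fin n → ℝ) → (Fin n → ℝ))
    (hφ : IsPolynomialMap φ)
    (hmaps : Set.MapsTo φ X Z)
    (hsurj : Set.SurjOn φ X Z) :
    X = Z :=
  realAlgebraicSet_eq_of_surjective_polynomial_map_general X Z hX hXZ φ hφ hsurj
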